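/- arXiv:2106.08196 — 7 statements merged into one kernel-verified Lean document; each statement's English description precedes it below -/
import Mathlib

section
/- Let λ > 0 and let F = (F_n) be a sequence of nonempty finite subsets of ℕ such that for each m ∈ ℕ, the number of indices n with |F_n| = m is at most 2^{λm}. Then the submeasure d_F on subsets of ℕ defined by d_F(A) = limsup_{n→∞} |A ∩ F_n| / |F_n| is nonatomic; that is, for every ε > 0 there exists a finite partition (A_i)_{i∈I} of ℕ such that d_F(A_i) ≤ ε for every i ∈ I. -/
/-!
Color `ℕ` with `k ≥ 2 ^ ((λ + 2) / ε)` colors. For a uniformly random coloring and `|F n| = m`,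
some color class meets `F n` in `t = ⌊ε m⌋ + 1` points with probability at most
`k · C(m, t) · k⁻ᵗ ≤ k · 2 ^ (-(λ + 1) m)`. At most `2 ^ (λ m)` indices have `|F n| = m`, so the
union bound over all `n` with `|F n| ≥ M` is at most `2 k · 2⁻ᴹ < 1` for large `M`: every finite
set of such indices admits a coloring whose classes meet each `F n` in at most `ε |F n|` points.
Compactness of `ℕ → Fin k` turns this into one coloring good for all of them, and since
`|F n| → ∞`, its color classes form a partition into pieces with `d_F ≤ ε`.
-/

open Filter Set

/-- The submeasure associated with a sequence of finite sets:
`dF F A = limsup_n |A ∩ F n| / |F n|`. -/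
noncomputable def dF (F : ℕ → Finset ℕ) (A : Set ℕ) : ℝ :=
  Filter.limsup (fun n => ((A ∩ (F n : Set ℕ)).ncard : ℝ) / (F n).card) Filter.atTop

open Finset

section Colorings

variable {α β : Type*} [Fintype α] [DecidableEq α] [Fintype β] [DecidableEq β]

theorem card_filter_forall_mem_eq_const (T : Finset α) (b : β) :
    #{c : α → β | ∀ x ∈ T, c x = b} = Fintype.card β ^ (Fintype.card α - #T) := by
  have : ({c : α → β | ∀ x ∈ T, c x = b} : Finset (α → β)) =
      Fintype.piFinset fun x => if x ∈ T then {b} else univ := by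
    ext c
    simp only [mem_filter, Finset.mem_univ, true_and, Fintype.mem_piFinset]
    refine forall_congr' fun x => ?_
    split_ifs <;> simp [*]
  rw [this, Fintype.card_piFinset]
  simp [apply_ite, prod_ite, filter_not, card_sdiff]

theorem card_filter_le_card_fiber (s : Finset α) (b : β) (t : ℕ) :
    #{c : α → β | t ≤ #{x ∈ s | c x = b}} ≤
      (#s).choose t * Fintype.card β ^ (Fintype.card α - t) := by
  have hcover : ({c : α → β | t ≤ #{x ∈ s | c x = b}} : Finset (α → β)) ⊆
      (s.powersetCard t).biUnion fun T => {c | ∀ x ∈ T, c x = b} := by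
    intro c hc
    obtain ⟨T, hTs, hT⟩ := exists_subset_card_eq (mem_filter.1 hc).2
    simp only [Finset.mem_biUnion, mem_powersetCard, mem_filter, Finset.mem_univ, true_and]
    exact ⟨T, ⟨hTs.trans (filter_subset _ _), hT⟩, fun x hx => (mem_filter.1 (hTs hx)).2⟩
  calc _ ≤ _ := Finset.card_le_card hcover
    _ ≤ ∑ T ∈ s.powersetCard t, #{c : α → β | ∀ x ∈ T, c x = b} := card_biUnion_le
    _ = _ := by
      rw [sum_congr rfl fun T hT => by
          rw [card_filter_forall_mem_eq_const, (mem_powersetCard.1 hT).2],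
        sum_const, card_powersetCard, smul_eq_mul]

theorem card_filter_le_card_fiber_real [Nonempty β] (s : Finset α) (b : β) (t : ℕ) :
    (#{c : α → β | t ≤ #{x ∈ s | c x = b}} : ℝ) ≤
      (#s).choose t * (Fintype.card β : ℝ) ^ Fintype.card α / (Fintype.card β : ℝ) ^ t := by
  obtain hts | hst := le_or_gt t #s
  · have htα : t ≤ Fintype.card α := hts.trans (card_le_univ s)
    rw [mul_div_assoc, div_eq_mul_inv, ← pow_sub₀ _ (Nat.cast_ne_zero.2 Fintype.card_ne_zero) htα]
    exact_mod_cast card_filter_le_card_fiber s b t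
  · have := card_filter_le_card_fiber s b t
    rw [Nat.choose_eq_zero_of_lt hst, zero_mul, Nat.le_zero] at this
    simp [this, Nat.choose_eq_zero_of_lt hst]

theorem Fintype.exists_card_fiber_lt_of_sum_lt_one [Nonempty β] {ι : Type*} (s : ι → Finset α)
    (t : ι → ℕ) (G : Finset ι)
    (hsum : ∑ i ∈ G, (Fintype.card β : ℝ) * (#(s i)).choose (t i) / (Fintype.card β : ℝ) ^ t i
      < 1) :
    ∃ c : α → β, ∀ i ∈ G, ∀ b, #{x ∈ s i | c x = b} < t i := by
  by_contra! hbad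
  set k : ℝ := (Fintype.card β : ℝ)
  have hcover : (univ : Finset (α → β)) ⊆
      G.biUnion fun i => univ.biUnion fun b => {c | t i ≤ #{x ∈ s i | c x = b}} := by
    intro c _
    obtain ⟨i, hi, b, hb⟩ := hbad c
    simp only [Finset.mem_biUnion, mem_filter, Finset.mem_univ, true_and]
    exact ⟨i, hi, b, hb⟩
  have hlt := calc k ^ Fintype.card α
      = (#(univ : Finset (α → β)) : ℝ) := by simp [k]
    _ ≤ ∑ i ∈ G, ∑ b : β, (#{c : α → β | t i ≤ #{x ∈ s i | c x = b}} : ℝ) := by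
      exact_mod_cast (Finset.card_le_card hcover).trans (card_biUnion_le.trans
        (sum_le_sum fun i _ => card_biUnion_le))
    _ ≤ ∑ i ∈ G, ∑ b : β, ((#(s i)).choose (t i) * k ^ Fintype.card α / k ^ t i) :=
      sum_le_sum fun i _ => sum_le_sum fun b _ => card_filter_le_card_fiber_real (s i) b (t i)
    _ = k ^ Fintype.card α * ∑ i ∈ G, k * (#(s i)).choose (t i) / k ^ t i := by
      simp only [sum_const, card_univ, nsmul_eq_mul, mul_sum]
      exact Finset.sum_congr rfl fun i _ => by ring
    _ < k ^ Fintype.card α * 1 := mul_lt_mul_of_pos_left hsum (by positivity)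
  linarith

end Colorings

theorem exists_card_fiber_lt_of_sum_lt_one {ι α β : Type*} [DecidableEq α] [Fintype β]
    [DecidableEq β] [Nonempty β] (s : ι → Finset α) (t : ι → ℕ) (G : Finset ι)
    (hsum : ∑ i ∈ G, (Fintype.card β : ℝ) * (#(s i)).choose (t i) / (Fintype.card β : ℝ) ^ t i
      < 1) :
    ∃ c : α → β, ∀ i ∈ G, ∀ b, #{x ∈ s i | c x = b} < t i := by
  set S := G.biUnion s
  have hsS : ∀ i ∈ G, ∀ x ∈ s i, x ∈ S := fun i hi x hx => Finset.mem_biUnion.2 ⟨i, hi, hx⟩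
  have hcard : ∀ i ∈ G, #((s i).subtype (· ∈ S)) = #(s i) := fun i hi => by
    rw [card_subtype, filter_true_of_mem (hsS i hi)]
  obtain ⟨d, hd⟩ := Fintype.exists_card_fiber_lt_of_sum_lt_one (β := β)
    (fun i => (s i).subtype (· ∈ S)) t G (by rwa [sum_congr rfl fun i hi => by rw [hcard i hi]])
  refine ⟨fun x => if hx : x ∈ S then d ⟨x, hx⟩ else Classical.arbitrary β, fun i hi b => ?_⟩
  convert hd i hi b using 1
  conv_lhs => rw [← subtype_map_of_mem (hsS i hi), filter_map, card_map]
  exact congrArg card (filter_congr fun x _ => by simp [x.2])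

/-- Each `P i` depends on finitely many coordinates, hence is closed in the compact space
`α → β`; the conclusion is the finite intersection property. -/
theorem exists_forall_of_forall_finset_of_eqOn {ι α β : Type*} [Finite β] (s : ι → Finset α)
    (P : ι → (α → β) → Prop) (hP : ∀ i c c', EqOn c c' (s i) → P i c → P i c')
    (h : ∀ u : Finset ι, ∃ c : α → β, ∀ i ∈ u, P i c) : ∃ c : α → β, ∀ i, P i c := by
  let _ : TopologicalSpace β := ⊥
  have : DiscreteTopology β := ⟨rfl⟩
  have hclosed : ∀ i, IsClosed {c : α → β | P i c} := fun i => by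
    have : {c : α → β | P i c} = (s i).restrict ⁻¹' ((s i).restrict '' {c | P i c}) := by
      refine (subset_preimage_image _ _).antisymm ?_
      rintro c ⟨c', hc', hrestrict⟩
      exact hP i c' c (fun a ha => congrFun hrestrict ⟨a, ha⟩) hc'
    rw [this]
    exact (isClosed_discrete _).preimage (continuous_pi fun a => continuous_apply _)
  obtain ⟨c, hc⟩ := CompactSpace.iInter_nonempty hclosed fun u => by
    simpa using h u
  exact ⟨c, mem_iInter.1 hc⟩

theorem sum_half_pow_le {P : Finset ℕ} {M : ℕ} (hP : ∀ m ∈ P, M ≤ m) :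
    ∑ m ∈ P, (1 / 2 : ℝ) ^ m ≤ 2 * (1 / 2) ^ M :=
  calc ∑ m ∈ P, (1 / 2 : ℝ) ^ m ≤ ∑ m ∈ Ico M (P.sup id + 1), (1 / 2 : ℝ) ^ m :=
        sum_le_sum_of_subset_of_nonneg
          (fun m hm => mem_Ico.2 ⟨hP m hm, Nat.lt_succ_of_le (le_sup (f := id) hm)⟩)
          (fun _ _ _ => by positivity)
    _ = (1 / 2) ^ M * ∑ i ∈ range (P.sup id + 1 - M), (1 / 2 : ℝ) ^ i := by
        rw [sum_Ico_eq_sum_range, mul_sum]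
        simp only [pow_add]
    _ ≤ (1 / 2) ^ M * 2 := by gcongr; exact sum_geometric_two_le _
    _ = 2 * (1 / 2) ^ M := mul_comm _ _

theorem two_rpow_mul_choose_div_pow_le {lam ε k : ℝ} (hε : 0 < ε) (hk1 : 1 ≤ k)
    (hk : (2 : ℝ) ^ ((lam + 2) / ε) ≤ k) {m t : ℕ} (ht : ε * m ≤ t) :
    (2 : ℝ) ^ (lam * m) * (k * m.choose t / k ^ t) ≤ k * (1 / 2) ^ m := by
  have hkt : (2 : ℝ) ^ (lam * m) * 2 ^ m * 2 ^ m ≤ k ^ t :=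
    calc (2 : ℝ) ^ (lam * m) * 2 ^ m * 2 ^ m = ((2 : ℝ) ^ ((lam + 2) / ε)) ^ (ε * m) := by
          rw [← Real.rpow_mul zero_le_two, mul_assoc, ← pow_add, ← Real.rpow_natCast,
            ← Real.rpow_add zero_lt_two]
          congr 1
          field_simp
          push_cast
          ring
      _ ≤ k ^ (ε * m) := by gcongr
      _ ≤ k ^ (t : ℝ) := Real.rpow_le_rpow_of_exponent_le hk1 ht
      _ = k ^ t := Real.rpow_natCast k t
  have hchoose : (m.choose t : ℝ) ≤ 2 ^ m := by exact_mod_cast Nat.choose_le_two_pow m t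
  have h2m : (0 : ℝ) < 2 ^ m := by positivity
  rw [mul_div_assoc', div_le_iff₀ (by positivity)]
  calc (2 : ℝ) ^ (lam * m) * (k * m.choose t) ≤ 2 ^ (lam * m) * (k * 2 ^ m) := by gcongr
    _ = k * (1 / 2) ^ m * (2 ^ (lam * m) * 2 ^ m * 2 ^ m) := by
        rw [one_div, inv_pow]; field_simp
    _ ≤ k * (1 / 2) ^ m * k ^ t := by gcongr

theorem sum_choose_div_pow_le {ι : Type*} (f : ι → ℕ) (G : Finset ι) {lam ε k : ℝ} (hε : 0 < ε)
    (hk1 : 1 ≤ k) (hk : (2 : ℝ) ^ ((lam + 2) / ε) ≤ k) {M : ℕ} (hM : ∀ i ∈ G, M ≤ f i)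
    (hfiber : ∀ m, (#{i ∈ G | f i = m} : ℝ) ≤ 2 ^ (lam * m)) :
    ∑ i ∈ G, k * (f i).choose (⌊ε * f i⌋₊ + 1) / k ^ (⌊ε * f i⌋₊ + 1) ≤ 2 * k * (1 / 2) ^ M := by
  rw [sum_comp (fun m : ℕ => k * m.choose (⌊ε * m⌋₊ + 1) / k ^ (⌊ε * m⌋₊ + 1)) f]
  calc _ ≤ ∑ m ∈ G.image f, k * (1 / 2) ^ m := sum_le_sum fun m _ => by
        rw [nsmul_eq_mul]
        refine (mul_le_mul_of_nonneg_right (hfiber m) (by positivity)).trans ?_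
        refine two_rpow_mul_choose_div_pow_le hε hk1 hk ?_
        push_cast
        linarith [Nat.lt_floor_add_one (ε * m)]
    _ = k * ∑ m ∈ G.image f, (1 / 2 : ℝ) ^ m := (mul_sum _ _ _).symm
    _ ≤ k * (2 * (1 / 2) ^ M) := by
        gcongr
        refine sum_half_pow_le fun m hm => ?_
        obtain ⟨i, hi, rfl⟩ := mem_image.1 hm
        exact hM i hi
    _ = 2 * k * (1 / 2) ^ M := by ring

theorem card_filter_le_ncard_setOf {ι : Type*} {p : ι → Prop} [DecidablePred p]
    (hp : {i | p i}.Finite) (G : Finset ι) : #{i ∈ G | p i} ≤ {i | p i}.ncard := by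
  rw [← Set.ncard_coe_finset]
  exact Set.ncard_le_ncard (fun i hi => (mem_filter.1 hi).2) hp

theorem exists_coloring_card_fiber_le {ι α : Type*} [DecidableEq α] {F : ι → Finset α}
    {lam ε : ℝ} (hε : 0 < ε) {k : ℕ} (hk1 : 1 ≤ k) (hk : (2 : ℝ) ^ ((lam + 2) / ε) ≤ k)
    {M : ℕ} (hM : 2 * k * (1 / 2 : ℝ) ^ M < 1)
    (hcount : ∀ m : ℕ, {i | #(F i) = m}.Finite ∧ ({i | #(F i) = m}.ncard : ℝ) ≤ 2 ^ (lam * m)) :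
    ∃ c : α → Fin k, ∀ i, M ≤ #(F i) → ∀ j, (#{x ∈ F i | c x = j} : ℝ) ≤ ε * #(F i) := by
  have : Nonempty (Fin k) := ⟨⟨0, hk1⟩⟩
  obtain ⟨c, hc⟩ : ∃ c : α → Fin k,
      ∀ i, M ≤ #(F i) → ∀ j, #{x ∈ F i | c x = j} < ⌊ε * #(F i)⌋₊ + 1 := by
    refine exists_forall_of_forall_finset_of_eqOn F _ (fun i c c' hcc' hc hMi j => ?_) fun u => ?_
    · convert hc hMi j using 2
      exact filter_congr fun x hx => by rw [hcc' hx]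
    have hfiber (G : Finset ι) (m : ℕ) : (#{i ∈ G | #(F i) = m} : ℝ) ≤ 2 ^ (lam * m) :=
      le_trans (mod_cast card_filter_le_ncard_setOf (hcount m).1 G) (hcount m).2
    have hsum : ∑ i ∈ u with M ≤ #(F i),
        (k : ℝ) * (#(F i)).choose (⌊ε * #(F i)⌋₊ + 1) / k ^ (⌊ε * #(F i)⌋₊ + 1) < 1 :=
      (sum_choose_div_pow_le (fun i => #(F i)) _ hε (mod_cast hk1) hk
        (fun i hi => (mem_filter.1 hi).2) (hfiber _)).trans_lt hM
    obtain ⟨c, hc⟩ := exists_card_fiber_lt_of_sum_lt_one (β := Fin k) F _ _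
      (by simpa only [Fintype.card_fin] using hsum)
    exact ⟨c, fun i hi hMi => hc i (mem_filter.2 ⟨hi, hMi⟩)⟩
  refine ⟨c, fun i hi j => ?_⟩
  calc (#{x ∈ F i | c x = j} : ℝ) ≤ ⌊ε * #(F i)⌋₊ := by
        exact_mod_cast Nat.lt_succ_iff.1 (hc i hi j)
    _ ≤ ε * #(F i) := Nat.floor_le (by positivity)

theorem tendsto_atTop_of_finite_fibers {f : ℕ → ℕ} (hf : ∀ m, {n | f n = m}.Finite) :
    Tendsto f atTop atTop := by
  simpa only [Nat.cofinite_eq_atTop] using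
    Tendsto.cofinite_of_finite_preimage_singleton fun m => (hf m).to_subtype

theorem ncard_preimage_singleton_inter {α β : Type*} [DecidableEq β] (c : α → β) (b : β)
    (s : Finset α) : (c ⁻¹' {b} ∩ s).ncard = #{x ∈ s | c x = b} := by
  rw [← Set.ncard_coe_finset, coe_filter]
  congr 1
  ext x
  simp [and_comm]

theorem dF_le_of_eventually_le {F : ℕ → Finset ℕ} {A : Set ℕ} {ε : ℝ} (hε : 0 ≤ ε)
    (h : ∀ᶠ n in atTop, ((A ∩ F n).ncard : ℝ) ≤ ε * #(F n)) : dF F A ≤ ε :=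
  limsup_le_of_le (isCoboundedUnder_le_of_le atTop fun _ => by positivity)
    (h.mono fun _ hn => div_le_of_le_mul₀ (by positivity) hε hn)

theorem stmt_2_general (lam : ℝ) (F : ℕ → Finset ℕ)
    (hcount : ∀ m : ℕ, {n : ℕ | (F n).card = m}.Finite ∧
      ({n : ℕ | (F n).card = m}.ncard : ℝ) ≤ 2 ^ (lam * m)) :
    ∀ ε : ℝ, 0 < ε → ∃ (k : ℕ) (A : Fin k → Set ℕ),
      (⋃ i, A i) = Set.univ ∧ Pairwise (Function.onFun Disjoint A) ∧
      ∀ i, dF F (A i) ≤ ε := by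
  intro ε hε
  obtain ⟨k, hk1, hk⟩ : ∃ k : ℕ, 1 ≤ k ∧ (2 : ℝ) ^ ((lam + 2) / ε) ≤ k :=
    ⟨⌈(2 : ℝ) ^ ((lam + 2) / ε)⌉₊ + 1, by omega, (Nat.le_ceil _).trans (by simp)⟩
  obtain ⟨M, hM⟩ := exists_pow_lt_of_lt_one (by positivity : (0 : ℝ) < 1 / (2 * k)) one_half_lt_one
  rw [lt_div_iff₀ (by positivity), mul_comm] at hM
  obtain ⟨c, hc⟩ := exists_coloring_card_fiber_le hε hk1 hk hM hcount
  refine ⟨k, fun j => c ⁻¹' {j}, by ext; simp,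
    fun i j hij => (Set.disjoint_singleton.2 hij).preimage c,
    fun j => dF_le_of_eventually_le hε.le ?_⟩
  filter_upwards [(tendsto_atTop_of_finite_fibers fun m => (hcount m).1).eventually_ge_atTop M]
    with n hn
  rw [ncard_preimage_singleton_inter]
  exact hc n hn j

theorem stmt_2 (lam : ℝ) (hlam : 0 < lam) (F : ℕ → Finset ℕ)
    (hne : ∀ n, (F n).Nonempty)
    (hcount : ∀ m : ℕ, {n : ℕ | (F n).card = m}.Finite ∧
      ({n : ℕ | (F n).card = m}.ncard : ℝ) ≤ 2 ^ (lam * m)) :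
    ∀ ε : ℝ, 0 < ε → ∃ (k : ℕ) (A : Fin k → Set ℕ),
      (⋃ i, A i) = Set.univ ∧ Pairwise (Function.onFun Disjoint A) ∧
      ∀ i, dF F (A i) ≤ ε :=
  stmt_2_general lam F hcount
end

section
/- The set of nonatomic bounded sequences in ℓ¹ is closed in the sup-norm of ℓ∞(ℓ¹): if z = (z_n) is a bounded sequence in ℓ¹ such that for every ε > 0 there exists a bounded nonatomic sequence x = (x_n) in ℓ¹ with sup_n ‖z_n − x_n‖₁ ≤ ε, then z is nonatomic. -/
open Filter Set

noncomputable def dsub (x : ℕ → lp (fun _ : ℕ => ℝ) 1) (A : Set ℕ) : ℝ :=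
  Filter.limsup (fun n => ∑' j : A, |x n j|) Filter.atTop

def IsBddSeq (x : ℕ → lp (fun _ : ℕ => ℝ) 1) : Prop := ∃ C : ℝ, ∀ n, ‖x n‖ ≤ C

/-- `x` is nonatomic: for every `ε > 0` there is a finite partition of `ℕ`
all of whose pieces have `dsub x`-value at most `ε`. -/
def Nonatomic (x : ℕ → lp (fun _ : ℕ => ℝ) 1) : Prop :=
  ∀ ε : ℝ, 0 < ε → ∃ (m : ℕ) (A : Fin m → Set ℕ),
    (⋃ i, A i) = Set.univ ∧ Pairwise (Function.onFun Disjoint A) ∧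
    ∀ i, dsub x (A i) ≤ ε

namespace lp

variable {ι : Type*} (f g : lp (fun _ : ι => ℝ) 1) (A : Set ι)

lemma summable_abs : Summable (fun j => |f j|) := by
  simpa [Real.norm_eq_abs] using (lp.memℓp f).summable (p := 1) one_pos

lemma norm_eq_tsum_abs : ‖f‖ = ∑' j, |f j| := by
  simpa [Real.norm_eq_abs] using lp.norm_eq_tsum_rpow (p := 1) one_pos f

lemma tsum_subtype_abs_le_norm : ∑' j : A, |f j| ≤ ‖f‖ :=
  (norm_eq_tsum_abs f).symm ▸
    (summable_abs f).tsum_subtype_le (fun j => |f j|) A fun _ => abs_nonneg _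

lemma tsum_subtype_abs_le_add_norm_sub :
    ∑' j : A, |f j| ≤ ∑' j : A, |g j| + ‖f - g‖ := by
  have hg := (summable_abs g).subtype A
  have hfg := (summable_abs (f - g)).subtype A
  calc ∑' j : A, |f j| ≤ ∑' j : A, (|g j| + |(f - g) j|) :=
        ((summable_abs f).subtype A).tsum_le_tsum
          (fun j => by simpa using abs_add_le (g j) (f j - g j)) (hg.add hfg)
    _ = ∑' j : A, |g j| + ∑' j : A, |(f - g) j| := hg.tsum_add hfg
    _ ≤ ∑' j : A, |g j| + ‖f - g‖ := by gcongr; exact tsum_subtype_abs_le_norm _ A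

end lp

lemma dsub_le_add_of_norm_sub_le {z x : ℕ → lp (fun _ : ℕ => ℝ) 1} {δ : ℝ} (hx : IsBddSeq x)
    (hzx : ∀ n, ‖z n - x n‖ ≤ δ) (A : Set ℕ) : dsub z A ≤ dsub x A + δ := by
  obtain ⟨C, hC⟩ := hx
  have hxA n : ∑' j : A, |x n j| ≤ C := (lp.tsum_subtype_abs_le_norm _ A).trans (hC n)
  have hbdd : IsBoundedUnder (· ≤ ·) atTop (fun n => ∑' j : A, |x n j|) :=
    isBoundedUnder_of ⟨C, hxA⟩
  have hnonneg {y : ℕ → lp (fun _ : ℕ => ℝ) 1} :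
      IsCoboundedUnder (· ≤ ·) atTop (fun n => ∑' j : A, |y n j|) :=
    isCoboundedUnder_le_of_le atTop fun _ => tsum_nonneg fun _ => abs_nonneg _
  calc dsub z A ≤ limsup (fun n => ∑' j : A, |x n j| + δ) atTop :=
        limsup_le_limsup
          (Eventually.of_forall fun n =>
            (lp.tsum_subtype_abs_le_add_norm_sub _ _ A).trans (add_le_add_right (hzx n) _))
          hnonneg (isBoundedUnder_of ⟨C + δ, fun n => add_le_add_left (hxA n) δ⟩)
    _ = dsub x A + δ := limsup_add_const atTop _ δ hbdd hnonneg

theorem stmt_5_general (z : ℕ → lp (fun _ : ℕ => ℝ) 1)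
    (h : ∀ ε : ℝ, 0 < ε → ∃ x : ℕ → lp (fun _ : ℕ => ℝ) 1,
      IsBddSeq x ∧ Nonatomic x ∧ ∀ n, ‖z n - x n‖ ≤ ε) :
    Nonatomic z := by
  intro ε hε
  obtain ⟨x, hx, hna, hzx⟩ := h (ε / 2) (half_pos hε)
  obtain ⟨m, A, hcover, hdisj, hsmall⟩ := hna (ε / 2) (half_pos hε)
  refine ⟨m, A, hcover, hdisj, fun i => ?_⟩
  linarith [dsub_le_add_of_norm_sub_le hx hzx (A i), hsmall i]

theorem stmt_5 (z : ℕ → lp (fun _ : ℕ => ℝ) 1) (hz : IsBddSeq z)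
    (h : ∀ ε : ℝ, 0 < ε → ∃ x : ℕ → lp (fun _ : ℕ => ℝ) 1,
      IsBddSeq x ∧ Nonatomic x ∧ ∀ n, ‖z n - x n‖ ≤ ε) :
    Nonatomic z :=
  stmt_5_general z h
end

section
/- Let x = (x_n) and y = (y_n) be bounded sequences in ℓ¹ such that d_y ≪₀ d_x, i.e., d_y(A) = 0 for every A ⊆ ℕ with d_x(A) = 0. If x is nonatomic, then y is nonatomic. -/
/-!
If `y` is not nonatomic at scale `ε`, then `ℕ` has no finite partition into pieces with
`d_y ≤ ε`, and a set without such a partition keeps this property on one of the pieces of any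
finite partition of it. Intersecting with the fine partitions given by the nonatomicity of `x`
yields a decreasing sequence `B_k` of such sets with `d_x(B_k) → 0`, while `d_y(B_k) > ε`.
Singletons, hence finite sets, are `d_x`-null and so `d_y`-null; this lets one pick finite blocks
`F_k ⊆ B_k`, moving off to infinity, and times `n_k` with `‖1_{F_k} y_{n_k}‖₁ > ε`. Their union `A`
lies in `B_K` up to a finite set for every `K`, so `d_x(A) = 0`, yet `d_y(A) ≥ ε`.
-/

open Filter Set

open Function

section Partition

variable {α : Type*} {P Q : Set α → Prop} {B : Set α}

def HasFinPartition (P : Set α → Prop) (B : Set α) : Prop :=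
  ∃ (m : ℕ) (C : Fin m → Set α), (⋃ i, C i) = B ∧ Pairwise (Disjoint on C) ∧ ∀ i, P (C i)

theorem hasFinPartition_self (h : P B) : HasFinPartition P B :=
  ⟨1, fun _ => B, iUnion_const B, Subsingleton.pairwise, fun _ => h⟩

theorem HasFinPartition.bind (h : HasFinPartition (HasFinPartition P) B) :
    HasFinPartition P B := by
  obtain ⟨m, C, hCU, hCd, hC⟩ := h
  choose k D hDU hDd hD using hC
  let E : (Σ i : Fin m, Fin (k i)) → Set α := fun s => D s.1 s.2
  have hEd : Pairwise (Disjoint on E) := by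
    rintro ⟨i, t⟩ ⟨i', t'⟩ hne
    obtain rfl | hi := eq_or_ne i i'
    · exact hDd i fun h : t = t' => hne (h ▸ rfl)
    · exact (hCd hi).mono (hDU i ▸ subset_iUnion _ t) (hDU i' ▸ subset_iUnion _ t')
  let e := Fintype.equivFin (Σ i : Fin m, Fin (k i))
  refine ⟨_, E ∘ e.symm, (e.symm.surjective.iUnion_comp E).trans ?_,
    hEd.comp_of_injective e.symm.injective, fun _ => hD _ _⟩
  rw [iUnion_sigma, ← hCU]
  exact iUnion_congr hDU

theorem HasFinPartition.exists_inter_not (hQ : HasFinPartition Q univ)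
    (hB : ¬HasFinPartition P B) : ∃ A, Q A ∧ ¬HasFinPartition P (B ∩ A) := by
  obtain ⟨m, A, hAU, hAd, hA⟩ := hQ
  by_contra! h
  refine hB (HasFinPartition.bind ⟨m, fun i => B ∩ A i, ?_, ?_, fun i => h _ (hA i)⟩)
  · rw [← inter_iUnion, hAU, inter_univ]
  · exact fun i j hij => (hAd hij).mono inter_subset_right inter_subset_right

theorem exists_antitone_not_hasFinPartition {μ : Set α → ℝ} (hμ : Monotone μ)
    (hμP : ∀ δ > 0, HasFinPartition (fun A => μ A ≤ δ) univ) (hP : ¬HasFinPartition P univ) :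
    ∃ B : ℕ → Set α, Antitone B ∧ (∀ k, ¬HasFinPartition P (B k)) ∧
      ∀ δ > 0, ∃ k, μ (B k) ≤ δ := by
  have step (k : ℕ) (S : {S // ¬HasFinPartition P S}) :
      ∃ T : {S // ¬HasFinPartition P S}, T.1 ⊆ S.1 ∧ μ T.1 ≤ 1 / (k + 1) := by
    obtain ⟨A, hA, hSA⟩ := (hμP (1 / (k + 1)) Nat.one_div_pos_of_nat).exists_inter_not S.2
    exact ⟨⟨S.1 ∩ A, hSA⟩, inter_subset_left, (hμ inter_subset_right).trans hA⟩
  choose next hsub hle using step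
  let B : ℕ → {S // ¬HasFinPartition P S} := fun k => Nat.rec ⟨univ, hP⟩ next k
  refine ⟨fun k => (B k).1, antitone_nat_of_succ_le fun k => hsub k (B k), fun k => (B k).2,
    fun δ hδ => ?_⟩
  obtain ⟨k, hk⟩ := exists_nat_one_div_lt hδ
  exact ⟨k + 1, (hle k (B k)).trans hk.le⟩

end Partition

local notation "ℓ¹" => lp (fun _ : ℕ => ℝ) 1

theorem summable_abs_lp_one (f : ℓ¹) : Summable fun j => |f j| := by
  simpa using (lp.memℓp f).summable (by norm_num)

theorem lp_one_norm_eq_tsum_abs (f : ℓ¹) : ‖f‖ = ∑' j, |f j| := by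
  simpa using lp.norm_eq_tsum_rpow (by norm_num : 0 < (1 : ENNReal).toReal) f

/-- `‖1_A · x_n‖₁` in the notation of the paper. -/
noncomputable def mass (x : ℕ → ℓ¹) (A : Set ℕ) (n : ℕ) : ℝ :=
  ∑' j : A, |x n j|

section Mass

variable {x : ℕ → ℓ¹} {A B : Set ℕ} {n : ℕ} {c : ℝ}

theorem mass_eq_tsum_indicator : mass x A n = ∑' j, A.indicator (fun j => |x n j|) j :=
  tsum_subtype A fun j => |x n j|

theorem mass_nonneg : 0 ≤ mass x A n := tsum_nonneg fun _ => abs_nonneg _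

theorem mass_empty : mass x ∅ n = 0 := tsum_empty

theorem mass_mono (h : A ⊆ B) : mass x A n ≤ mass x B n := by
  have hs := summable_abs_lp_one (x n)
  rw [mass_eq_tsum_indicator, mass_eq_tsum_indicator]
  exact (hs.indicator A).tsum_le_tsum (indicator_le_indicator_of_subset h fun _ => abs_nonneg _)
    (hs.indicator B)

theorem mass_le_norm : mass x A n ≤ ‖x n‖ := by
  have hs := summable_abs_lp_one (x n)
  rw [lp_one_norm_eq_tsum_abs, mass_eq_tsum_indicator]
  exact (hs.indicator A).tsum_le_tsum (indicator_le_self' fun _ _ => abs_nonneg _) hs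

theorem mass_union_le : mass x (A ∪ B) n ≤ mass x A n + mass x B n := by
  have hs := summable_abs_lp_one (x n)
  simp only [mass_eq_tsum_indicator]
  rw [← (hs.indicator A).tsum_add (hs.indicator B)]
  refine (hs.indicator _).tsum_le_tsum (fun j => ?_) ((hs.indicator A).add (hs.indicator B))
  exact (le_add_of_nonneg_right (indicator_nonneg (fun _ _ => abs_nonneg _) j)).trans_eq
    (congrFun (indicator_union_add_inter _ A B) j)

theorem eventually_lt_mass_inter_Iio (h : c < mass x A n) :
    ∀ᶠ b in atTop, c < mass x (A ∩ Iio b) n := by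
  have hs := summable_abs_lp_one (x n)
  rw [mass_eq_tsum_indicator] at h
  filter_upwards [(hs.indicator A).hasSum.tendsto_sum_nat.eventually (lt_mem_nhds h)] with b hb
  refine hb.trans_le ?_
  rw [mass_eq_tsum_indicator]
  calc ∑ j ∈ Finset.range b, A.indicator (fun j => |x n j|) j
      = ∑ j ∈ Finset.range b, (A ∩ Iio b).indicator (fun j => |x n j|) j :=
        Finset.sum_congr rfl fun j hj => by
          rw [inter_comm, ← indicator_indicator,
            indicator_of_mem (mem_Iio.2 (Finset.mem_range.1 hj))]
    _ ≤ _ := (hs.indicator _).sum_le_tsum _ fun j _ => indicator_nonneg (fun _ _ => abs_nonneg _) j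

end Mass

theorem nonatomic_iff {x : ℕ → ℓ¹} :
    Nonatomic x ↔ ∀ ε > 0, HasFinPartition (fun A => dsub x A ≤ ε) univ :=
  Iff.rfl

section Dsub

variable {x y : ℕ → ℓ¹} {A B s : Set ℕ}

theorem dsub_eq_limsup_mass : dsub x A = limsup (mass x A) atTop := rfl

theorem IsBddSeq.isBoundedUnder_mass (hx : IsBddSeq x) (A : Set ℕ) :
    IsBoundedUnder (· ≤ ·) atTop (mass x A) := by
  obtain ⟨C, hC⟩ := hx
  exact isBoundedUnder_of ⟨C, fun n => mass_le_norm.trans (hC n)⟩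

theorem isBoundedUnder_ge_mass : IsBoundedUnder (· ≥ ·) atTop (mass x A) :=
  isBoundedUnder_of ⟨0, fun _ => mass_nonneg⟩

theorem isCoboundedUnder_le_mass : IsCoboundedUnder (· ≤ ·) atTop (mass x A) :=
  isBoundedUnder_ge_mass.isCoboundedUnder_le

theorem dsub_nonneg (hx : IsBddSeq x) (A : Set ℕ) : 0 ≤ dsub x A :=
  le_limsup_of_frequently_le (Frequently.of_forall fun _ => mass_nonneg) (hx.isBoundedUnder_mass A)

theorem dsub_mono (hx : IsBddSeq x) (h : A ⊆ B) : dsub x A ≤ dsub x B :=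
  limsup_le_limsup (Eventually.of_forall fun _ => mass_mono h) isCoboundedUnder_le_mass
    (hx.isBoundedUnder_mass B)

theorem dsub_empty : dsub x ∅ = 0 := by
  rw [dsub_eq_limsup_mass, show mass x ∅ = fun _ => 0 from funext fun _ => mass_empty]
  exact limsup_const 0

theorem dsub_union_le (hx : IsBddSeq x) : dsub x (A ∪ B) ≤ dsub x A + dsub x B :=
  (limsup_le_limsup (Eventually.of_forall fun _ => mass_union_le) isCoboundedUnder_le_mass
    (isBoundedUnder_le_add (hx.isBoundedUnder_mass A) (hx.isBoundedUnder_mass B))).trans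
    (limsup_add_le isBoundedUnder_ge_mass (hx.isBoundedUnder_mass A) isCoboundedUnder_le_mass
      (hx.isBoundedUnder_mass B))

theorem dsub_eq_zero_of_finite (hx : IsBddSeq x) (hx1 : ∀ j, dsub x {j} = 0) (hs : s.Finite) :
    dsub x s = 0 := by
  induction s, hs using Set.Finite.induction_on with
  | empty => exact dsub_empty
  | @insert j s _ _ ih =>
    refine le_antisymm ?_ (dsub_nonneg hx _)
    calc dsub x (insert j s) = dsub x ({j} ∪ s) := by rw [insert_eq]
      _ ≤ dsub x {j} + dsub x s := dsub_union_le hx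
      _ = 0 := by rw [hx1, ih, add_zero]

theorem dsub_le_of_subset_union_finite (hx : IsBddSeq x) (hx1 : ∀ j, dsub x {j} = 0)
    (hs : s.Finite) (h : A ⊆ s ∪ B) : dsub x A ≤ dsub x B :=
  calc dsub x A ≤ dsub x (s ∪ B) := dsub_mono hx h
    _ ≤ dsub x s + dsub x B := dsub_union_le hx
    _ = dsub x B := by rw [dsub_eq_zero_of_finite hx hx1 hs, zero_add]

theorem Nonatomic.dsub_singleton (hnx : Nonatomic x) (hx : IsBddSeq x) (j : ℕ) :
    dsub x {j} = 0 := by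
  refine le_antisymm (le_of_forall_gt_imp_ge_of_dense fun ε hε => ?_) (dsub_nonneg hx _)
  obtain ⟨m, A, hU, -, hA⟩ := hnx ε hε
  obtain ⟨i, hi⟩ := mem_iUnion.1 (hU ▸ mem_univ j)
  exact (dsub_mono hx (singleton_subset_iff.2 hi)).trans (hA i)

theorem exists_lt_mass_inter_Ico (hy : IsBddSeq y) (hy1 : ∀ j, dsub y {j} = 0) {c : ℝ}
    (h : c < dsub y B) (n₀ b₀ : ℕ) : ∃ n b, n₀ < n ∧ b₀ < b ∧ c < mass y (B ∩ Ico b₀ b) n := by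
  have hB : c < dsub y (B ∩ Ici b₀) := h.trans_le <| dsub_le_of_subset_union_finite hy hy1
    (finite_Iio b₀) fun j hj => (lt_or_ge j b₀).imp id fun hjb => ⟨hj, hjb⟩
  obtain ⟨n, hcn, hn⟩ := ((frequently_lt_of_lt_limsup isCoboundedUnder_le_mass hB).and_eventually
    (eventually_gt_atTop n₀)).exists
  obtain ⟨b, hcb, hb⟩ := ((eventually_lt_mass_inter_Iio hcn).and (eventually_gt_atTop b₀)).exists
  rw [inter_assoc, Ici_inter_Iio] at hcb
  exact ⟨n, b, hn, hb, hcb⟩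

theorem exists_dsub_eq_zero_and_le_dsub (hx : IsBddSeq x) (hy : IsBddSeq y)
    (hx1 : ∀ j, dsub x {j} = 0) (hy1 : ∀ j, dsub y {j} = 0) {B : ℕ → Set ℕ} (hB : Antitone B)
    (hBx : ∀ δ > 0, ∃ k, dsub x (B k) ≤ δ) {c : ℝ} (hBy : ∀ k, c < dsub y (B k)) :
    ∃ A, dsub x A = 0 ∧ c ≤ dsub y A := by
  choose n b hn hb hmass using fun k (p : ℕ × ℕ) =>
    exists_lt_mass_inter_Ico hy hy1 (hBy k) p.1 p.2
  -- `(p k).1` is the time at which the `y`-mass of the `k`-th block `[(p k).2, (p (k+1)).2)` is seen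
  let p : ℕ → ℕ × ℕ := fun k => Nat.rec (0, 0) (fun k q => (n k q, b k q)) k
  have hn_mono : StrictMono fun k => (p k).1 := strictMono_nat_of_lt_succ fun k => hn k (p k)
  have hb_mono : Monotone fun k => (p k).2 := monotone_nat_of_le_succ fun k => (hb k (p k)).le
  let A := ⋃ k, B k ∩ Ico (p k).2 (p (k + 1)).2
  refine ⟨A, le_antisymm (le_of_forall_gt_imp_ge_of_dense fun δ hδ => ?_) (dsub_nonneg hx A), ?_⟩
  · obtain ⟨K, hK⟩ := hBx δ hδ
    refine (dsub_le_of_subset_union_finite hx hx1 (finite_Iio (p K).2) ?_).trans hK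
    refine iUnion_subset fun k j hj => ?_
    obtain ⟨hjB, -, hj⟩ := hj
    rcases lt_or_ge k K with hk | hk
    · exact Or.inl (hj.trans_le (hb_mono hk))
    · exact Or.inr (hB hk hjB)
  · refine le_limsup_of_frequently_le ?_ (hy.isBoundedUnder_mass A)
    refine (hn_mono.tendsto_atTop.comp (tendsto_add_atTop_nat 1)).frequently
      (Frequently.of_forall fun k => ?_)
    exact (hmass k (p k)).le.trans (mass_mono (subset_iUnion_of_subset k subset_rfl))

end Dsub

theorem stmt_9 (x y : ℕ → lp (fun _ : ℕ => ℝ) 1)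
    (hx : IsBddSeq x) (hy : IsBddSeq y)
    (hac : ∀ A : Set ℕ, dsub x A = 0 → dsub y A = 0)
    (hnx : Nonatomic x) :
    Nonatomic y := by
  rw [nonatomic_iff]
  intro ε hε
  by_contra hy_atom
  have hx1 := hnx.dsub_singleton hx
  obtain ⟨B, hB, hBy, hBx⟩ := exists_antitone_not_hasFinPartition (fun _ _ => dsub_mono hx)
    (nonatomic_iff.1 hnx) hy_atom
  obtain ⟨A, hAx, hAy⟩ := exists_dsub_eq_zero_and_le_dsub hx hy hx1 (fun j => hac _ (hx1 j)) hB
    hBx fun k => not_le.1 fun h => hBy k (hasFinPartition_self (P := (dsub y · ≤ ε)) h)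
  linarith [hac A hAx]
end

section
/- Let T : ℓ¹ → ℓ¹ be a continuous linear operator, let z_n = T(e_n) where (e_n) is the standard unit vector basis of ℓ¹, and let x = (x_n) be a bounded sequence in ℓ¹ with r = sup_n ‖x_n‖₁ that converges to zero pointwise on ℕ (i.e., x_n(j) → 0 as n → ∞ for each j). Let y_n = T(x_n). Then for every subset A ⊆ ℕ, limsup_{n→∞} ‖1_A · y_n‖_∞ ≤ r · limsup_{n→∞} ‖1_A · z_n‖_∞, where ‖u‖_∞ = sup_k |u(k)|. -/
open Filter Set

/-- The sup-norm of `u` restricted to the set `A`: `‖1_A · u‖_∞`. -/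
noncomputable def supNormOn (A : Set ℕ) (u : lp (fun _ : ℕ => ℝ) 1) : ℝ :=
  ⨆ k : ℕ, A.indicator (fun k => |u k|) k

/-! Write `z j = T (e j)`, so that `(T u) k = ∑ j, u j * z j k`. If `c` exceeds the limsup of
`‖1_A · z j‖_∞`, only indices `j < N` can have `‖1_A · z j‖_∞ > c`, and for those `‖z j‖ ≤ ‖T‖`;
hence `‖1_A · T u‖_∞ ≤ ‖T‖ ∑_{j<N} |u j| + c ‖u‖₁`. For `u = x n` the finite sum tends to `0`
by pointwise convergence, so the limsup is at most `r c`; now let `c` decrease to the limsup. -/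

open scoped lp Topology

lemma lp.abs_apply_le_norm {ι : Type*} (u : ℓ¹(ι, ℝ)) (k : ι) : |u k| ≤ ‖u‖ :=
  lp.norm_apply_le_norm one_ne_zero u k

lemma lp.hasSum_abs {ι : Type*} (u : ℓ¹(ι, ℝ)) : HasSum (fun j => |u j|) ‖u‖ := by
  simpa using lp.hasSum_norm (p := 1) one_pos u

lemma ContinuousLinearMap.hasSum_smul_map_single {ι 𝕜 F : Type*} [DecidableEq ι] [NormedField 𝕜]
    [AddCommGroup F] [Module 𝕜 F] [TopologicalSpace F]
    (T : ℓ¹(ι, 𝕜) →L[𝕜] F) (u : ℓ¹(ι, 𝕜)) :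
    HasSum (fun j => u j • T (lp.single 1 j 1)) (T u) := by
  simpa [← map_smul, ← lp.single_smul] using T.hasSum (lp.hasSum_single ENNReal.one_ne_top u)

lemma ContinuousLinearMap.hasSum_mul_map_single_apply {ι κ : Type*} [DecidableEq ι]
    (T : ℓ¹(ι, ℝ) →L[ℝ] ℓ¹(κ, ℝ)) (u : ℓ¹(ι, ℝ)) (k : κ) :
    HasSum (fun j => u j * T (lp.single 1 j 1) k) (T u k) :=
  (lp.evalCLM ℝ _ 1 k).hasSum (T.hasSum_smul_map_single u)

lemma ContinuousLinearMap.norm_map_single_le {ι 𝕜 F : Type*} [DecidableEq ι]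
    [NontriviallyNormedField 𝕜] [SeminormedAddCommGroup F] [NormedSpace 𝕜 F]
    (T : ℓ¹(ι, 𝕜) →L[𝕜] F) (j : ι) :
    ‖T (lp.single 1 j 1)‖ ≤ ‖T‖ :=
  T.unit_le_opNorm _ (by simp [lp.norm_single])

lemma ContinuousLinearMap.abs_apply_le_of_abs_apply_map_single_le {ι κ : Type*} [DecidableEq ι]
    {T : ℓ¹(ι, ℝ) →L[ℝ] ℓ¹(κ, ℝ)} (u : ℓ¹(ι, ℝ)) {k : κ} {s : Finset ι} {c : ℝ} (hc : 0 ≤ c)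
    (h : ∀ j ∉ s, |T (lp.single 1 j 1) k| ≤ c) :
    |T u k| ≤ ‖T‖ * ∑ j ∈ s, |u j| + c * ‖u‖ := by
  have hbound : HasSum (fun j => (s : Set ι).indicator (fun j => ‖T‖ * |u j|) j + c * |u j|)
      (‖T‖ * ∑ j ∈ s, |u j| + c * ‖u‖) := by
    rw [Finset.mul_sum]
    exact (hasSum_subtype_iff_indicator.1 (s.hasSum _)).add ((lp.hasSum_abs u).mul_left c)
  refine (T.hasSum_mul_map_single_apply u k).norm_le_of_bounded hbound fun j => ?_
  rw [Real.norm_eq_abs, abs_mul]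
  by_cases hj : j ∈ s
  · have : |T (lp.single 1 j 1) k| ≤ ‖T‖ :=
      (lp.abs_apply_le_norm _ k).trans (T.norm_map_single_le j)
    rw [indicator_of_mem hj]
    nlinarith [abs_nonneg (u j)]
  · rw [indicator_of_notMem hj, zero_add, mul_comm c]
    exact mul_le_mul_of_nonneg_left (h j hj) (abs_nonneg _)

lemma supNormOn_nonneg (A : Set ℕ) (u : ℓ¹(ℕ, ℝ)) : 0 ≤ supNormOn A u :=
  Real.iSup_nonneg fun _ => indicator_nonneg (fun _ _ => abs_nonneg _) _

lemma supNormOn_le {A : Set ℕ} {u : ℓ¹(ℕ, ℝ)} {c : ℝ} (hc : 0 ≤ c) (h : ∀ k ∈ A, |u k| ≤ c) :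
    supNormOn A u ≤ c :=
  ciSup_le fun k => by
    by_cases hk : k ∈ A
    · simpa [indicator_of_mem hk] using h k hk
    · simpa [indicator_of_notMem hk] using hc

lemma supNormOn_le_norm (A : Set ℕ) (u : ℓ¹(ℕ, ℝ)) : supNormOn A u ≤ ‖u‖ :=
  supNormOn_le (norm_nonneg u) fun k _ => lp.abs_apply_le_norm u k

lemma abs_apply_le_supNormOn {A : Set ℕ} (u : ℓ¹(ℕ, ℝ)) {k : ℕ} (hk : k ∈ A) :
    |u k| ≤ supNormOn A u := by
  have hbdd : BddAbove (range fun k => A.indicator (fun k => |u k|) k) :=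
    ⟨‖u‖, forall_mem_range.2 fun k =>
      (indicator_le_self' (fun _ _ => abs_nonneg _) k).trans (lp.abs_apply_le_norm u k)⟩
  simpa [supNormOn, indicator_of_mem hk] using le_ciSup hbdd k

lemma supNormOn_map_le (T : ℓ¹(ℕ, ℝ) →L[ℝ] ℓ¹(ℕ, ℝ)) (u : ℓ¹(ℕ, ℝ)) {A : Set ℕ} {N : ℕ}
    {c : ℝ} (h : ∀ j ≥ N, supNormOn A (T (lp.single 1 j 1)) ≤ c) :
    supNormOn A (T u) ≤ ‖T‖ * ∑ j ∈ Finset.range N, |u j| + c * ‖u‖ := by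
  have hc : 0 ≤ c := (supNormOn_nonneg A _).trans (h N le_rfl)
  refine supNormOn_le (add_nonneg (by positivity) (mul_nonneg hc (norm_nonneg u))) fun k hk => ?_
  refine T.abs_apply_le_of_abs_apply_map_single_le u hc fun j hj => ?_
  exact (abs_apply_le_supNormOn _ hk).trans (h j (by simpa using hj))

theorem stmt_12 (T : lp (fun _ : ℕ => ℝ) 1 →L[ℝ] lp (fun _ : ℕ => ℝ) 1)
    (x : ℕ → lp (fun _ : ℕ => ℝ) 1) (r : ℝ)
    (hbdd : BddAbove (Set.range fun n => ‖x n‖))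
    (hr : r = ⨆ n, ‖x n‖)
    (hp : ∀ j : ℕ, Filter.Tendsto (fun n => x n j) Filter.atTop (nhds 0))
    (A : Set ℕ) :
    Filter.limsup (fun n => supNormOn A (T (x n))) Filter.atTop ≤
      r * Filter.limsup (fun n => supNormOn A (T (lp.single 1 n 1))) Filter.atTop := by
  set L := limsup (fun n => supNormOn A (T (lp.single 1 n 1))) atTop
  have hxr : ∀ n, ‖x n‖ ≤ r := fun n => hr ▸ le_ciSup hbdd n
  have hz_bdd : IsBoundedUnder (· ≤ ·) atTop fun n => supNormOn A (T (lp.single 1 n 1)) :=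
    isBoundedUnder_of ⟨‖T‖, fun n => (supNormOn_le_norm A _).trans (T.norm_map_single_le n)⟩
  have hcob : IsCoboundedUnder (· ≤ ·) atTop fun n => supNormOn A (T (x n)) :=
    isCoboundedUnder_le_of_le atTop fun n => supNormOn_nonneg A _
  have h_lt : ∀ c, L < c → limsup (fun n => supNormOn A (T (x n))) atTop ≤ r * c := by
    intro c hc
    obtain ⟨N, hN⟩ := eventually_atTop.1 (eventually_lt_of_limsup_lt hc hz_bdd)
    have hc0 : 0 ≤ c := (supNormOn_nonneg A _).trans (hN N le_rfl).le
    have hbound (n : ℕ) :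
        supNormOn A (T (x n)) ≤ ‖T‖ * ∑ j ∈ Finset.range N, |x n j| + c * r :=
      (supNormOn_map_le T (x n) fun j hj => (hN j hj).le).trans (by gcongr; exact hxr n)
    have htend : Tendsto (fun n => ‖T‖ * ∑ j ∈ Finset.range N, |x n j| + c * r) atTop
        (𝓝 (r * c)) := by
      simpa [mul_comm c] using
        ((tendsto_finsetSum _ fun j _ => (hp j).abs).const_mul ‖T‖).add_const (c * r)
    exact (limsup_le_limsup (.of_forall hbound) hcob htend.isBoundedUnder_le).trans
      htend.limsup_eq.le
  have hrc : Tendsto (fun c => r * c) (𝓝[>] L) (𝓝 (r * L)) :=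
    ((continuous_const_mul r).tendsto L).mono_left nhdsWithin_le_nhds
  exact ge_of_tendsto hrc (eventually_nhdsWithin_of_forall h_lt)
end

section
/- Let T : ℓ¹ → ℓ¹ be a continuous linear operator, let z_n = T(e_n) where (e_n) is the standard unit vector basis of ℓ¹, assume z = (z_n) is bounded, and let x = (x_n) be a bounded sequence in ℓ¹ with r = sup_n ‖x_n‖₁ that converges to zero pointwise on ℕ (i.e., x_n(j) → 0 as n → ∞ for each j). Let y_n = T(x_n). Then for every subset A ⊆ ℕ, d_y(A) ≤ r · d_z(A). -/
open Filter Set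

/-! Let `p = ‖1_A · T(·)‖₁`, a continuous seminorm on `ℓ¹`. Expanding `x_n = ∑ₖ x_n(k) eₖ`
gives `p(x_n) ≤ ∑ₖ |x_n(k)| p(eₖ)`. Beyond an index `N` with `p(eₖ) < d_z(A) + ε` for `k ≥ N`,
the tail of this sum is at most `r (d_z(A) + ε)`, while the finitely many terms with `k < N`
tend to `0` as `n → ∞` because `x_n → 0` pointwise. -/

open Topology

local notation "ℓ¹" => lp (fun _ : ℕ => ℝ) 1

theorem Seminorm.le_tsum_of_hasSum {E : Type*} [SeminormedAddCommGroup E] [NormedSpace ℝ E]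
    {p : Seminorm ℝ E} (hp : Continuous p) {g : ℕ → E} {s : E} (hg : HasSum g s)
    (hpg : Summable fun k => p (g k)) : p s ≤ ∑' k, p (g k) :=
  le_of_tendsto_of_tendsto' ((hp.tendsto s).comp hg) hpg.hasSum fun t =>
    Finset.le_sum_of_subadditive p (map_zero p).le (map_add_le_add p) t g

namespace lp

theorem hasSum_abs_one (f : ℓ¹) : HasSum (fun j => |f j|) ‖f‖ := by
  simpa only [Real.norm_eq_abs, ENNReal.toReal_one, Real.rpow_one] using
    hasSum_norm (p := 1) (by norm_num) f

theorem summable_abs_one (f : ℓ¹) : Summable fun j => |f j| :=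
  (hasSum_abs_one f).summable

theorem hasSum_smul_single_one (f : ℓ¹) : HasSum (fun k => f k • lp.single 1 k (1 : ℝ)) f := by
  simpa only [← lp.single_smul, smul_eq_mul, mul_one] using lp.hasSum_single ENNReal.one_ne_top f

/-- The `ℓ¹`-mass of `f` on `A`, i.e. `‖1_A · f‖₁`. -/
noncomputable def restrictSeminorm (A : Set ℕ) : Seminorm ℝ ℓ¹ :=
  Seminorm.of (fun f => ∑' j : A, |f j|)
    (fun f g => calc
      ∑' j : A, |(f + g) j| ≤ ∑' j : A, (|f j| + |g j|) :=
        ((summable_abs_one _).subtype A).tsum_le_tsum (fun j => abs_add_le _ _)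
          (((summable_abs_one f).subtype A).add ((summable_abs_one g).subtype A))
      _ = ∑' j : A, |f j| + ∑' j : A, |g j| :=
        ((summable_abs_one f).subtype A).tsum_add ((summable_abs_one g).subtype A))
    (fun c f => by
      simp only [coeFn_smul, Pi.smul_apply, smul_eq_mul, abs_mul, tsum_mul_left,
        Real.norm_eq_abs])

theorem restrictSeminorm_le_norm (A : Set ℕ) : restrictSeminorm A ≤ normSeminorm ℝ ℓ¹ :=
  fun f => (Summable.tsum_subtype_le _ A (fun _ => abs_nonneg _) (summable_abs_one f)).trans_eq
    (hasSum_abs_one f).tsum_eq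

theorem continuous_restrictSeminorm (A : Set ℕ) : Continuous (restrictSeminorm A) :=
  Seminorm.continuous_of_le continuous_norm (restrictSeminorm_le_norm A)

end lp

namespace Seminorm

variable {p : Seminorm ℝ ℓ¹}

theorem exists_apply_single_le (hp : Continuous p) : ∃ C, ∀ k, p (lp.single 1 k 1) ≤ C := by
  obtain ⟨C, -, hC⟩ := p.bound_of_continuous_normedSpace hp
  exact ⟨C, fun k => by simpa [lp.norm_single] using hC (lp.single 1 k 1)⟩

theorem summable_abs_mul_apply_single (hp : Continuous p) (f : ℓ¹) :
    Summable fun k => |f k| * p (lp.single 1 k 1) := by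
  obtain ⟨C, hC⟩ := exists_apply_single_le hp
  exact (lp.summable_abs_one f |>.mul_right C).of_nonneg_of_le
    (fun k => mul_nonneg (abs_nonneg _) (apply_nonneg p _))
    fun k => mul_le_mul_of_nonneg_left (hC k) (abs_nonneg _)

theorem le_tsum_abs_mul_apply_single (hp : Continuous p) (f : ℓ¹) :
    p f ≤ ∑' k, |f k| * p (lp.single 1 k 1) := by
  simpa only [map_smul_eq_mul, Real.norm_eq_abs] using
    p.le_tsum_of_hasSum hp (lp.hasSum_smul_single_one f)
      (by simpa only [map_smul_eq_mul, Real.norm_eq_abs] using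
        summable_abs_mul_apply_single hp f)

theorem le_sum_range_add_norm_mul (hp : Continuous p) (f : ℓ¹) {N : ℕ} {B : ℝ}
    (hB : ∀ k ≥ N, p (lp.single 1 k 1) ≤ B) :
    p f ≤ ∑ k ∈ Finset.range N, |f k| * p (lp.single 1 k 1) + ‖f‖ * B := by
  have hB₀ : 0 ≤ B := (apply_nonneg p _).trans (hB N le_rfl)
  have hhead : HasSum (fun k => if k < N then |f k| * p (lp.single 1 k 1) else 0)
      (∑ k ∈ Finset.range N, |f k| * p (lp.single 1 k 1)) := by
    rw [← Finset.sum_congr rfl fun k hk => if_pos (Finset.mem_range.mp hk)]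
    exact hasSum_sum_of_ne_finset_zero fun k hk => if_neg (by simpa using hk)
  refine (le_tsum_abs_mul_apply_single hp f).trans <| hasSum_le (fun k => ?_)
    (summable_abs_mul_apply_single hp f).hasSum (hhead.add ((lp.hasSum_abs_one f).mul_right B))
  split_ifs with hk
  · nlinarith [abs_nonneg (f k)]
  · simpa using mul_le_mul_of_nonneg_left (hB k (not_lt.mp hk)) (abs_nonneg (f k))

theorem limsup_apply_le_mul_limsup_apply_single (hp : Continuous p) {x : ℕ → ℓ¹} {r : ℝ}
    (hxr : ∀ n, ‖x n‖ ≤ r) (hx : ∀ j, Tendsto (fun n => x n j) atTop (𝓝 0)) :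
    limsup (fun n => p (x n)) atTop ≤ r * limsup (fun k => p (lp.single 1 k 1)) atTop := by
  set D := limsup (fun k => p (lp.single 1 k 1)) atTop
  have hbdd : IsBoundedUnder (· ≤ ·) atTop fun k => p (lp.single 1 k 1) :=
    isBoundedUnder_of (exists_apply_single_le hp)
  have hε : ∀ ε > 0, limsup (fun n => p (x n)) atTop ≤ r * (D + ε) := by
    intro ε hε
    obtain ⟨N, hN⟩ := eventually_atTop.mp <|
      eventually_lt_of_limsup_lt (lt_add_of_pos_right D hε) hbdd
    have hDε : 0 ≤ D + ε := (apply_nonneg p _).trans (hN N le_rfl).le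
    have hhead : Tendsto (fun n => ∑ k ∈ Finset.range N, |x n k| * p (lp.single 1 k 1) +
        r * (D + ε)) atTop (𝓝 (r * (D + ε))) := by
      simpa using (tendsto_finsetSum _ fun k _ => (hx k).abs.mul_const _).add_const (r * (D + ε))
    calc limsup (fun n => p (x n)) atTop
        ≤ limsup (fun n => ∑ k ∈ Finset.range N, |x n k| * p (lp.single 1 k 1) +
            r * (D + ε)) atTop := by
          refine limsup_le_limsup (Eventually.of_forall fun n => ?_)
            (isCoboundedUnder_le_of_le atTop fun n => apply_nonneg p _) hhead.isBoundedUnder_le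
          exact (le_sum_range_add_norm_mul hp (x n) fun k hk => (hN k hk).le).trans
            (add_le_add_right (mul_le_mul_of_nonneg_right (hxr n) hDε) _)
      _ = r * (D + ε) := hhead.limsup_eq
  have hlim : Tendsto (fun ε => r * (D + ε)) (𝓝[>] 0) (𝓝 (r * D)) := by
    simpa using ((continuous_const.add continuous_id).const_mul r).tendsto' 0 (r * D) (by simp)
      |>.mono_left nhdsWithin_le_nhds
  exact ge_of_tendsto hlim (eventually_nhdsWithin_of_forall hε)

end Seminorm

theorem stmt_14_general (T : lp (fun _ : ℕ => ℝ) 1 →L[ℝ] lp (fun _ : ℕ => ℝ) 1)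
    (x : ℕ → lp (fun _ : ℕ => ℝ) 1) (r : ℝ)
    (hbdd : BddAbove (Set.range fun n => ‖x n‖))
    (hr : r = ⨆ n, ‖x n‖)
    (hp : ∀ j : ℕ, Filter.Tendsto (fun n => x n j) Filter.atTop (nhds 0))
    (A : Set ℕ) :
    dsub (fun n => T (x n)) A ≤ r * dsub (fun n => T (lp.single 1 n 1)) A :=
  ((lp.restrictSeminorm A).comp T.toLinearMap).limsup_apply_le_mul_limsup_apply_single
    ((lp.continuous_restrictSeminorm A).comp T.continuous) (fun n => hr ▸ le_ciSup hbdd n) hp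

theorem stmt_14 (T : lp (fun _ : ℕ => ℝ) 1 →L[ℝ] lp (fun _ : ℕ => ℝ) 1)
    (hz : IsBddSeq (fun n => T (lp.single 1 n 1)))
    (x : ℕ → lp (fun _ : ℕ => ℝ) 1) (r : ℝ)
    (hbdd : BddAbove (Set.range fun n => ‖x n‖))
    (hr : r = ⨆ n, ‖x n‖)
    (hp : ∀ j : ℕ, Filter.Tendsto (fun n => x n j) Filter.atTop (nhds 0))
    (A : Set ℕ) :
    dsub (fun n => T (x n)) A ≤ r * dsub (fun n => T (lp.single 1 n 1)) A :=
  stmt_14_general T x r hbdd hr hp A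
end

section
/- Let T : ℓ¹ → ℓ¹ be a continuous linear operator, let z_n = T(e_n) where (e_n) is the standard unit vector basis of ℓ¹, assume z = (z_n) is bounded, and let x = (x_n) be a bounded sequence in ℓ¹ with r = sup_n ‖x_n‖₁ that converges to zero pointwise on ℕ. Let y_n = T(x_n) and let δ > 0. Then every finite partition (A_i)_{i∈I} of ℕ with d_z(A_i) ≤ δ for each i ∈ I satisfies d_y(A_i) ≤ r·δ for each i ∈ I. -/
open Filter Set

/-!
Write `z k = T (e k)`. Every `f ∈ ℓ¹` is the norm-convergent series `∑ f k • e k`, so the mass of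
`T f` on `A` is at most `∑ k, |f k| * ‖1_A z k‖`. For `f = x n` the finitely many coordinates
`k < N` carry a mass tending to `0` as `n → ∞`, while for `k ≥ N` the weights `‖1_A z k‖` are
below `d_z(A) + ε`; hence `d_y(A) ≤ r * (d_z(A) + ε)` for every `ε > 0`.
-/

open scoped lp Topology

namespace lp

variable {ι E : Type*} [NormedAddCommGroup E]

theorem hasSum_norm_one (f : ℓ¹(ι, E)) : HasSum (fun i => ‖f i‖) ‖f‖ := by
  simpa using lp.hasSum_norm (p := 1) (by norm_num) f

theorem tsum_subtype_norm_le_norm (A : Set ι) (f : ℓ¹(ι, E)) : ∑' i : A, ‖f i‖ ≤ ‖f‖ :=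
  (hasSum_norm_one f).tsum_eq ▸
    (hasSum_norm_one f).summable.tsum_subtype_le _ A fun _ => norm_nonneg _

variable {p : ENNReal}

theorem memℓp_indicator (A : Set ι) (f : lp (fun _ : ι => E) p) : Memℓp (A.indicator f) p :=
  (lp.memℓp f).mono' fun _ => norm_indicator_le_norm_self _ _

variable [Fact (1 ≤ p)] (𝕜 : Type*) [NormedField 𝕜] [NormedSpace 𝕜 E]

noncomputable def indicatorCLM (A : Set ι) : lp (fun _ : ι => E) p →L[𝕜] lp (fun _ : ι => E) p :=
  LinearMap.mkContinuous
    { toFun f := ⟨A.indicator f, memℓp_indicator A f⟩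
      map_add' f g := lp.ext <| Set.indicator_add' A (f : ι → E) g
      map_smul' c f := lp.ext <| Set.indicator_const_smul A c (f : ι → E) }
    1 fun f => by
      rw [one_mul]
      exact lp.norm_mono (zero_lt_one.trans_le Fact.out).ne' fun _ =>
        norm_indicator_le_norm_self _ _

theorem coe_indicatorCLM (A : Set ι) (f : lp (fun _ : ι => E) p) :
    ⇑(indicatorCLM 𝕜 A f) = A.indicator f := rfl

theorem norm_indicatorCLM_one (A : Set ι) (f : ℓ¹(ι, E)) :
    ‖indicatorCLM 𝕜 A f‖ = ∑' i : A, ‖f i‖ := by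
  rw [(tsum_subtype A fun i => ‖f i‖), ← (hasSum_norm_one _).tsum_eq]
  simp only [coe_indicatorCLM, norm_indicator_eq_indicator_norm]

end lp

theorem ContinuousLinearMap.norm_apply_le_tsum_single {ι F : Type*} [DecidableEq ι]
    [NormedAddCommGroup F] [NormedSpace ℝ F] (S : ℓ¹(ι, ℝ) →L[ℝ] F) (f : ℓ¹(ι, ℝ)) :
    ‖S f‖ ≤ ∑' k, |f k| * ‖S (lp.single 1 k 1)‖ := by
  have hS : HasSum (fun k => f k • S (lp.single 1 k 1)) (S f) := by
    convert S.hasSum (lp.hasSum_single ENNReal.one_ne_top f) using 2 with k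
    rw [← map_smul, ← lp.single_smul, smul_eq_mul, mul_one]
  have hsummable : Summable fun k => |f k| * ‖S (lp.single 1 k 1)‖ := by
    refine Summable.of_nonneg_of_le (fun k => by positivity) (fun k => ?_)
      ((lp.hasSum_norm_one f).summable.mul_right ‖S‖)
    rw [← Real.norm_eq_abs]
    gcongr
    simpa [lp.norm_single] using S.le_opNorm (lp.single 1 k 1)
  rw [← hS.tsum_eq]
  simpa [norm_smul] using norm_tsum_le_tsum_norm (f := fun k => f k • S (lp.single 1 k 1))
    (by simpa [norm_smul] using hsummable)

theorem limsup_le_mul_of_le_tsum_mul {s : ℕ → ℝ} {a : ℕ → ℕ → ℝ} {c : ℕ → ℝ} {r δ C : ℝ}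
    (hs : ∀ n, 0 ≤ s n) (hsa : ∀ n, s n ≤ ∑' k, a n k * c k)
    (ha : ∀ n k, 0 ≤ a n k) (ha_sum : ∀ n, Summable (a n)) (ha_le : ∀ n, ∑' k, a n k ≤ r)
    (ha_lim : ∀ k, Tendsto (fun n => a n k) atTop (𝓝 0))
    (hc : ∀ k, 0 ≤ c k) (hcC : ∀ k, c k ≤ C) (hcδ : limsup c atTop ≤ δ) :
    limsup s atTop ≤ r * δ := by
  have hac_sum (n : ℕ) : Summable fun k => a n k * c k :=
    (ha_sum n).mul_right C |>.of_nonneg_of_le (fun k => mul_nonneg (ha n k) (hc k))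
      fun k => mul_le_mul_of_nonneg_left (hcC k) (ha n k)
  have hε : ∀ ε > 0, limsup s atTop ≤ r * (δ + ε) := by
    intro ε hε
    obtain ⟨N, hN⟩ := eventually_atTop.1 <| eventually_lt_of_limsup_lt
      (hcδ.trans_lt (lt_add_of_pos_right δ hε)) (isBoundedUnder_of ⟨C, hcC⟩)
    have hδε : 0 ≤ δ + ε := (hc N).trans (hN N le_rfl).le
    have hbound (n : ℕ) : s n ≤ C * ∑ k ∈ Finset.range N, a n k + r * (δ + ε) := by
      have head : ∑ k ∈ Finset.range N, a n k * c k ≤ C * ∑ k ∈ Finset.range N, a n k := by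
        rw [Finset.mul_sum]
        refine Finset.sum_le_sum fun k _ => ?_
        rw [mul_comm C]
        exact mul_le_mul_of_nonneg_left (hcC k) (ha n k)
      have tail : ∑' k, a n (k + N) * c (k + N) ≤ r * (δ + ε) := calc
        ∑' k, a n (k + N) * c (k + N) ≤ ∑' k, a n (k + N) * (δ + ε) :=
          ((summable_nat_add_iff N).2 (hac_sum n)).tsum_le_tsum
            (fun k => mul_le_mul_of_nonneg_left (hN _ (Nat.le_add_left N k)).le (ha n _))
            (((summable_nat_add_iff N).2 (ha_sum n)).mul_right _)
        _ = (∑' k, a n (k + N)) * (δ + ε) := tsum_mul_right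
        _ ≤ r * (δ + ε) := by
          gcongr
          linarith [(ha_sum n).sum_add_tsum_nat_add N, ha_le n,
            Finset.sum_nonneg fun k (_ : k ∈ Finset.range N) => ha n k]
      linarith [hsa n, (hac_sum n).sum_add_tsum_nat_add N]
    have hlim : Tendsto (fun n => C * ∑ k ∈ Finset.range N, a n k + r * (δ + ε)) atTop
        (𝓝 (r * (δ + ε))) := by
      simpa using ((tendsto_finsetSum _ fun k _ => ha_lim k).const_mul C).add_const (r * (δ + ε))
    calc limsup s atTop
        ≤ limsup (fun n => C * ∑ k ∈ Finset.range N, a n k + r * (δ + ε)) atTop :=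
          limsup_le_limsup (Eventually.of_forall hbound) (isCoboundedUnder_le_of_le atTop hs)
            hlim.isBoundedUnder_le
      _ = r * (δ + ε) := hlim.limsup_eq
  have hlim : Tendsto (fun ε => r * (δ + ε)) (𝓝[>] 0) (𝓝 (r * δ)) :=
    tendsto_nhdsWithin_of_tendsto_nhds <| by
      simpa using ((tendsto_id (x := 𝓝 (0 : ℝ))).const_add δ).const_mul r
  exact ge_of_tendsto hlim (eventually_nhdsWithin_of_forall hε)

theorem tsum_subtype_abs_apply_le {ι κ : Type*} [DecidableEq ι]
    (T : ℓ¹(ι, ℝ) →L[ℝ] ℓ¹(κ, ℝ)) (A : Set κ) (f : ℓ¹(ι, ℝ)) :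
    ∑' j : A, |T f j| ≤ ∑' k, |f k| * ∑' j : A, |T (lp.single 1 k 1) j| := by
  simpa only [ContinuousLinearMap.comp_apply, lp.norm_indicatorCLM_one, Real.norm_eq_abs] using
    ((lp.indicatorCLM ℝ A).comp T).norm_apply_le_tsum_single f

theorem stmt_15_general (T : lp (fun _ : ℕ => ℝ) 1 →L[ℝ] lp (fun _ : ℕ => ℝ) 1)
    (x : ℕ → lp (fun _ : ℕ => ℝ) 1) (r : ℝ)
    (hbdd : BddAbove (Set.range fun n => ‖x n‖))
    (hr : r = ⨆ n, ‖x n‖)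
    (hp : ∀ j : ℕ, Filter.Tendsto (fun n => x n j) Filter.atTop (nhds 0))
    (δ : ℝ)
    (m : ℕ) (A : Fin m → Set ℕ)
    (hfine : ∀ i, dsub (fun n => T (lp.single 1 n 1)) (A i) ≤ δ) :
    ∀ i, dsub (fun n => T (x n)) (A i) ≤ r * δ := by
  intro i
  have hx (n : ℕ) : HasSum (fun k => |x n k|) ‖x n‖ := by
    simpa only [Real.norm_eq_abs] using lp.hasSum_norm_one (x n)
  have hxr (n : ℕ) : ∑' k, |x n k| ≤ r := (hx n).tsum_eq ▸ hr ▸ le_ciSup hbdd n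
  have hzT (k : ℕ) : ∑' j : A i, |T (lp.single 1 k 1) j| ≤ ‖T‖ := calc
    _ ≤ ‖T (lp.single 1 k 1)‖ := lp.tsum_subtype_norm_le_norm _ _
    _ ≤ ‖T‖ := by simpa [lp.norm_single] using T.le_opNorm (lp.single 1 k 1)
  exact limsup_le_mul_of_le_tsum_mul (fun n => tsum_nonneg fun _ => abs_nonneg _)
    (fun n => tsum_subtype_abs_apply_le T (A i) (x n)) (fun n k => abs_nonneg _)
    (fun n => (hx n).summable) hxr (fun k => by simpa using (hp k).abs)
    (fun k => tsum_nonneg fun _ => abs_nonneg _) hzT (hfine i)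

theorem stmt_15 (T : lp (fun _ : ℕ => ℝ) 1 →L[ℝ] lp (fun _ : ℕ => ℝ) 1)
    (hz : IsBddSeq (fun n => T (lp.single 1 n 1)))
    (x : ℕ → lp (fun _ : ℕ => ℝ) 1) (r : ℝ)
    (hbdd : BddAbove (Set.range fun n => ‖x n‖))
    (hr : r = ⨆ n, ‖x n‖)
    (hp : ∀ j : ℕ, Filter.Tendsto (fun n => x n j) Filter.atTop (nhds 0))
    (δ : ℝ) (hδ : 0 < δ)
    (m : ℕ) (A : Fin m → Set ℕ)
    (hcover : (⋃ i, A i) = Set.univ)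
    (hdisj : Pairwise (Function.onFun Disjoint A))
    (hfine : ∀ i, dsub (fun n => T (lp.single 1 n 1)) (A i) ≤ δ) :
    ∀ i, dsub (fun n => T (x n)) (A i) ≤ r * δ :=
  stmt_15_general T x r hbdd hr hp δ m A hfine
end

section
/- Let T : ℓ¹ → ℓ¹ be a continuous linear operator such that the sequence z = (T(e_n)) converges to zero uniformly on ℕ (i.e., ‖T e_n‖_∞ = sup_k |(T e_n)(k)| → 0 as n → ∞), where (e_n) is the standard unit vector basis of ℓ¹. Then for every bounded sequence x = (x_n) in ℓ¹ converging to zero pointwise on ℕ, the sequence (T(x_n)) is bounded and converges to zero uniformly on ℕ, i.e., ‖T x_n‖_∞ → 0. -/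
/-!
Put `a j := ‖T e_j‖_∞`. Expanding `u = ∑ u(j) e_j` coordinatewise gives
`‖T u‖_∞ ≤ ∑ |u(j)| a j`, and `a j ≤ ‖T‖`. Since `a j → 0`, the weighted sum `∑ |x_n(j)| a j`
is at most a finite sum over `j < N`, which tends to zero because `x_n → 0` pointwise, plus
`δ · sup_n ‖x_n‖₁` with `δ` as small as we like.
-/

open Filter Set

open Topology

lemma tsum_mul_le_sum_range_add {y a : ℕ → ℝ} (hy : 0 ≤ y) (hys : Summable y)
    (hya : Summable fun j => y j * a j) {N : ℕ} {δ : ℝ} (hδ0 : 0 ≤ δ)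
    (hδ : ∀ j ≥ N, a j ≤ δ) :
    ∑' j, y j * a j ≤ ∑ j ∈ Finset.range N, y j * a j + δ * ∑' j, y j := by
  rw [← hya.sum_add_tsum_nat_add N]
  gcongr
  calc ∑' j, y (j + N) * a (j + N)
      ≤ ∑' j, δ * y (j + N) :=
        ((summable_nat_add_iff N).2 hya).tsum_le_tsum
          (fun j => by rw [mul_comm δ]; exact mul_le_mul_of_nonneg_left (hδ _ (by omega)) (hy _))
          (((summable_nat_add_iff N).2 hys).mul_left δ)
    _ ≤ δ * ∑' j, y j := by
        rw [tsum_mul_left, ← hys.sum_add_tsum_nat_add N]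
        have : 0 ≤ ∑ j ∈ Finset.range N, y j := Finset.sum_nonneg fun j _ => hy j
        gcongr
        linarith

theorem tendsto_tsum_mul_of_tendsto_zero {y : ℕ → ℕ → ℝ} {a : ℕ → ℝ} {C : ℝ}
    (hy : ∀ n, 0 ≤ y n) (hys : ∀ n, Summable (y n)) (hC : ∀ n, ∑' j, y n j ≤ C)
    (hpt : ∀ j, Tendsto (y · j) atTop (𝓝 0)) (ha0 : 0 ≤ a) (ha : Tendsto a atTop (𝓝 0)) :
    Tendsto (fun n => ∑' j, y n j * a j) atTop (𝓝 0) := by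
  obtain ⟨M, hM⟩ := ha.bddAbove_range
  have hya (n : ℕ) : Summable fun j => y n j * a j :=
    ((hys n).mul_right M).of_nonneg_of_le (fun j => mul_nonneg (hy n j) (ha0 j))
      (fun j => mul_le_mul_of_nonneg_left (hM (mem_range_self j)) (hy n j))
  have hnonneg (n : ℕ) : 0 ≤ ∑' j, y n j * a j :=
    tsum_nonneg fun j => mul_nonneg (hy n j) (ha0 j)
  refine tendsto_order.2 ⟨fun b hb => Eventually.of_forall fun n => hb.trans_le (hnonneg n),
    fun ε hε => ?_⟩
  obtain ⟨δ, hδ, hCδ⟩ := exists_pos_mul_lt (half_pos hε) C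
  obtain ⟨N, hN⟩ := eventually_atTop.1 (ha.eventually (eventually_le_nhds hδ))
  have hhead : Tendsto (fun n => ∑ j ∈ Finset.range N, y n j * a j) atTop (𝓝 0) := by
    simpa using tendsto_finsetSum _ fun j _ => (hpt j).mul_const (a j)
  filter_upwards [hhead.eventually (eventually_lt_nhds (half_pos hε))] with n hn
  calc ∑' j, y n j * a j
      ≤ ∑ j ∈ Finset.range N, y n j * a j + δ * ∑' j, y n j :=
        tsum_mul_le_sum_range_add (hy n) (hys n) (hya n) hδ.le hN
    _ ≤ ∑ j ∈ Finset.range N, y n j * a j + C * δ := by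
        rw [mul_comm C]; gcongr; exact hC n
    _ < ε := by linarith

local notation "ℓ¹" => lp (fun _ : ℕ => ℝ) 1

namespace L1Space

lemma hasSum_abs (v : ℓ¹) : HasSum (fun j => |v j|) ‖v‖ := by
  simpa using lp.hasSum_norm (p := 1) (by norm_num) v

lemma abs_apply_le_norm (v : ℓ¹) (k : ℕ) : |v k| ≤ ‖v‖ :=
  lp.norm_apply_le_norm one_ne_zero v k

lemma norm_single_one (j : ℕ) : ‖(lp.single 1 j 1 : ℓ¹)‖ = 1 := by
  rw [lp.norm_single zero_lt_one, norm_one]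

lemma hasSum_mul_apply_single (T : ℓ¹ →L[ℝ] ℓ¹) (u : ℓ¹) (k : ℕ) :
    HasSum (fun j => u j * T (lp.single 1 j 1) k) (T u k) := by
  have h := ((lp.evalCLM ℝ (fun _ : ℕ => ℝ) 1 k).comp T).hasSum
    (lp.hasSum_single ENNReal.one_ne_top u)
  refine h.congr_fun fun j => ?_
  have : (lp.single 1 j (u j) : ℓ¹) = u j • lp.single 1 j 1 := by
    rw [← lp.single_smul, smul_eq_mul, mul_one]
  simp [this, lp.evalCLM]

noncomputable def supNorm (v : ℓ¹) : ℝ := ⨆ k, |v k|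

lemma abs_apply_le_supNorm (v : ℓ¹) (k : ℕ) : |v k| ≤ supNorm v :=
  le_ciSup ⟨‖v‖, forall_mem_range.2 (abs_apply_le_norm v)⟩ k

lemma supNorm_nonneg (v : ℓ¹) : 0 ≤ supNorm v :=
  (abs_nonneg _).trans (abs_apply_le_supNorm v 0)

lemma supNorm_le_norm (v : ℓ¹) : supNorm v ≤ ‖v‖ :=
  ciSup_le (abs_apply_le_norm v)

lemma supNorm_apply_single_le_opNorm (T : ℓ¹ →L[ℝ] ℓ¹) (j : ℕ) :
    supNorm (T (lp.single 1 j 1)) ≤ ‖T‖ := by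
  simpa [norm_single_one] using (supNorm_le_norm _).trans (T.le_opNorm (lp.single 1 j 1))

lemma supNorm_apply_le_tsum (T : ℓ¹ →L[ℝ] ℓ¹) (u : ℓ¹) :
    supNorm (T u) ≤ ∑' j, |u j| * supNorm (T (lp.single 1 j 1)) := by
  have hs : Summable fun j => |u j| * supNorm (T (lp.single 1 j 1)) :=
    ((hasSum_abs u).summable.mul_right ‖T‖).of_nonneg_of_le
      (fun j => mul_nonneg (abs_nonneg _) (supNorm_nonneg _))
      (fun j => mul_le_mul_of_nonneg_left (supNorm_apply_single_le_opNorm T j) (abs_nonneg _))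
  refine ciSup_le fun k => (hasSum_mul_apply_single T u k).norm_le_of_bounded hs.hasSum
    fun j => ?_
  rw [Real.norm_eq_abs, abs_mul]
  exact mul_le_mul_of_nonneg_left (abs_apply_le_supNorm _ k) (abs_nonneg _)

end L1Space

open L1Space in
theorem stmt_17 (T : lp (fun _ : ℕ => ℝ) 1 →L[ℝ] lp (fun _ : ℕ => ℝ) 1)
    (hz : Filter.Tendsto (fun n => ⨆ k : ℕ, |T (lp.single 1 n 1) k|)
      Filter.atTop (nhds 0)) :
    ∀ x : ℕ → lp (fun _ : ℕ => ℝ) 1, IsBddSeq x →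
      (∀ j : ℕ, Filter.Tendsto (fun n => x n j) Filter.atTop (nhds 0)) →
      IsBddSeq (fun n => T (x n)) ∧
      Filter.Tendsto (fun n => ⨆ k : ℕ, |T (x n) k|) Filter.atTop (nhds 0) := by
  rintro x ⟨C, hC⟩ hpt
  refine ⟨⟨‖T‖ * C, fun n => (T.le_opNorm _).trans (by gcongr; exact hC n)⟩, ?_⟩
  have hweighted :
      Tendsto (fun n => ∑' j, |x n j| * supNorm (T (lp.single 1 j 1))) atTop (𝓝 0) :=
    tendsto_tsum_mul_of_tendsto_zero (fun n j => abs_nonneg _) (fun n => (hasSum_abs _).summable)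
      (fun n => (hasSum_abs _).tsum_eq.trans_le (hC n)) (fun j => by simpa using (hpt j).abs)
      (fun j => supNorm_nonneg _) hz
  exact squeeze_zero (fun n => supNorm_nonneg _) (fun n => supNorm_apply_le_tsum T (x n)) hweighted
end
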